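/- Let 0 < α < n, 1 < p ≤ q < ∞, and let (u, σ) be a pair of weights. The following are equivalent: (1) (u, σ) ∈ A_{p,q}^α; (2) there is a constant C such that for every f ∈ L^p(σ), sup_{t>0} t · u({x ∈ ℝ^n : M_α(fσ)(x) > t})^{1/q} ≤ C (∫_{ℝ^n} |f|^p σ dx)^{1/p}. Moreover, when (1) holds the constant in (2) may be taken to be C(n,α) [u,σ]_{A_{p,q}^α}. -/

import Mathlib

open MeasureTheory ENNReal Set Filter
open scoped NNReal

noncomputable section

abbrev Eucl (n : ℕ) := EuclideanSpace ℝ (Fin n)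

/-- The half-open cube in `ℝⁿ` with corner `a` and side length `h`. -/
def cube (n : ℕ) (a : Fin n → ℝ) (h : ℝ) : Set (Eucl n) :=
  {x | ∀ i, a i ≤ x i ∧ x i < a i + h}

/-- Average of an `ℝ≥0∞`-valued function over a set (w.r.t. Lebesgue measure). -/
def lavg {n : ℕ} (Q : Set (Eucl n)) (g : Eucl n → ℝ≥0∞) : ℝ≥0∞ :=
  (∫⁻ x in Q, g x) / volume Q

/-- `u(E) = ∫_E u dx` for a weight `u`. -/
def setW {n : ℕ} (u : Eucl n → ℝ) (s : Set (Eucl n)) : ℝ≥0∞ :=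
  ∫⁻ x in s, ENNReal.ofReal (u x)

/-- A weight: nonnegative, measurable, positive on a set of positive measure. -/
def Weight {n : ℕ} (u : Eucl n → ℝ) : Prop :=
  Measurable u ∧ (∀ x, 0 ≤ u x) ∧ 0 < volume {x | 0 < u x}

/-- The fractional maximal operator `M_α`. -/
def maxFn (n : ℕ) (α : ℝ) (f : Eucl n → ℝ) (x : Eucl n) : ℝ≥0∞ :=
  ⨆ (a : Fin n → ℝ) (h : ℝ) (_ : 0 < h) (_ : x ∈ cube n a h),
    volume (cube n a h) ^ (α / (n:ℝ)) * lavg (cube n a h) (fun y => ENNReal.ofReal |f y|)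

/-- The fractional maximal operator restricted to a family of cubes. -/
def maxFnGrid (n : ℕ) (α : ℝ) (D : Set (Set (Eucl n))) (f : Eucl n → ℝ) (x : Eucl n) : ℝ≥0∞ :=
  ⨆ (Q : Set (Eucl n)) (_ : Q ∈ D) (_ : x ∈ Q),
    volume Q ^ (α / (n:ℝ)) * lavg Q (fun y => ENNReal.ofReal |f y|)

/-- The fractional integral `I_α`, as a positive (`ℝ≥0∞`-valued) operator. -/
def fracIntE (n : ℕ) (α : ℝ) (f : Eucl n → ℝ) (x : Eucl n) : ℝ≥0∞ :=
  ∫⁻ y, ENNReal.ofReal (f y) * ENNReal.ofReal (‖x - y‖ ^ (α - (n:ℝ)))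

/-- The dyadic fractional integral associated to a family of cubes. -/
def fracIntGrid (n : ℕ) (α : ℝ) (D : Set (Set (Eucl n))) (f : Eucl n → ℝ) (x : Eucl n) : ℝ≥0∞ :=
  ∑' Q : D, Set.indicator (Q : Set (Eucl n))
    (fun _ => volume (Q : Set (Eucl n)) ^ (α / (n:ℝ)) *
      lavg (Q : Set (Eucl n)) (fun y => ENNReal.ofReal (f y))) x

/-- The standard dyadic grid `Δ`. -/
def stdGrid (n : ℕ) : Set (Set (Eucl n)) :=
  {Q | ∃ (k : ℤ) (m : Fin n → ℤ), Q = cube n (fun i => (2:ℝ) ^ k * (m i : ℝ)) ((2:ℝ) ^ k)}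

/-- The translated dyadic grids `𝒟^t`. -/
def transGrid (n : ℕ) (t : Fin n → ℝ) : Set (Set (Eucl n)) :=
  {Q | ∃ (j : ℤ) (m : Fin n → ℤ), Q = cube n (fun i => (2:ℝ) ^ j * ((m i : ℝ) + t i)) ((2:ℝ) ^ j)}

def thirds : Set ℝ := {0, 1/3, -1/3}

/-- A collection of cubes is a dyadic grid. -/
def IsDyadicGrid (n : ℕ) (D : Set (Set (Eucl n))) : Prop :=
  (∀ Q ∈ D, ∃ (a : Fin n → ℝ) (k : ℤ), Q = cube n a ((2:ℝ) ^ k)) ∧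
  (∀ P ∈ D, ∀ Q ∈ D, P ∩ Q = P ∨ P ∩ Q = Q ∨ P ∩ Q = ∅) ∧
  (∀ (k : ℤ) (x : Eucl n), ∃! Q, Q ∈ D ∧ (∃ a, Q = cube n a ((2:ℝ) ^ k)) ∧ x ∈ Q)

/-- The set `E(Q) = Q \ ⋃ {P ∈ S : P ⊊ Q}`. -/
def sparseE {n : ℕ} (S : Set (Set (Eucl n))) (Q : Set (Eucl n)) : Set (Eucl n) :=
  Q \ ⋃ P ∈ {P | P ∈ S ∧ P ⊂ Q}, P

/-- A sparse family of cubes. -/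
def IsSparse {n : ℕ} (S : Set (Set (Eucl n))) : Prop :=
  ∀ Q ∈ S, volume Q ≤ 2 * volume (sparseE S Q)

/-- The sparse linearized maximal operator `L_α^S`. -/
def sparseL (n : ℕ) (α : ℝ) (S : Set (Set (Eucl n))) (f : Eucl n → ℝ) (x : Eucl n) : ℝ≥0∞ :=
  ∑' Q : S, Set.indicator (sparseE S (Q : Set (Eucl n)))
    (fun _ => volume (Q : Set (Eucl n)) ^ (α / (n:ℝ)) *
      lavg (Q : Set (Eucl n)) (fun y => ENNReal.ofReal (f y))) x

/-- The Calderón–Zygmund cubes: the maximal cubes `Q ∈ Δ` with `⟨|f|⟩_Q > λ`. -/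
def czCubes (n : ℕ) (f : Eucl n → ℝ) (lam : ℝ) : Set (Set (Eucl n)) :=
  {Q | Q ∈ stdGrid n ∧ ENNReal.ofReal lam < lavg Q (fun y => ENNReal.ofReal |f y|) ∧
    ∀ P ∈ stdGrid n, Q ⊆ P →
      ENNReal.ofReal lam < lavg P (fun y => ENNReal.ofReal |f y|) → P = Q}

/-- The one-weight `A_{p,q}` constant, `1 < p`. -/
def apqConst (n : ℕ) (p q : ℝ) (w : Eucl n → ℝ) : ℝ≥0∞ :=
  ⨆ (a : Fin n → ℝ) (h : ℝ) (_ : 0 < h),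
    (lavg (cube n a h) (fun x => ENNReal.ofReal (w x ^ q))) ^ (1/q) *
    (lavg (cube n a h) (fun x => ENNReal.ofReal (w x ^ (-(p/(p-1)))))) ^ (1 - 1/p)

/-- The one-weight `A_{1,q}` constant. -/
def a1qConst (n : ℕ) (q : ℝ) (w : Eucl n → ℝ) : ℝ≥0∞ :=
  ⨆ (a : Fin n → ℝ) (h : ℝ) (_ : 0 < h),
    (lavg (cube n a h) (fun x => ENNReal.ofReal (w x ^ q))) ^ (1/q) *
    essSup (fun x => ENNReal.ofReal (w x)⁻¹) (volume.restrict (cube n a h))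

/-- The two-weight `A_{p,q}^α` constant. -/
def apqAlpha (n : ℕ) (α p q : ℝ) (u σ : Eucl n → ℝ) : ℝ≥0∞ :=
  ⨆ (a : Fin n → ℝ) (h : ℝ) (_ : 0 < h),
    volume (cube n a h) ^ (α / (n:ℝ) + 1/q - 1/p) *
    ((lavg (cube n a h) (fun x => ENNReal.ofReal (u x))) ^ (1/q) *
     (lavg (cube n a h) (fun x => ENNReal.ofReal (σ x))) ^ (1 - 1/p))

/-- Sawyer testing constant for the fractional maximal operator. -/
def maxTestConst (n : ℕ) (α p q : ℝ) (u σ : Eucl n → ℝ) : ℝ≥0∞ :=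
  ⨆ (a : Fin n → ℝ) (h : ℝ) (_ : 0 < h) (_ : 0 < setW σ (cube n a h)),
    setW σ (cube n a h) ^ (-(1/p)) *
    (∫⁻ x in cube n a h,
      (maxFn n α ((cube n a h).indicator σ) x) ^ q * ENNReal.ofReal (u x)) ^ (1/q)

/-- Sawyer testing constant for the fractional integral operator. -/
def fracTestConst (n : ℕ) (α p q : ℝ) (u σ : Eucl n → ℝ) : ℝ≥0∞ :=
  ⨆ (a : Fin n → ℝ) (h : ℝ) (_ : 0 < h) (_ : 0 < setW σ (cube n a h)),
    setW σ (cube n a h) ^ (-(1/p)) *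
    (∫⁻ x in cube n a h,
      (fracIntE n α ((cube n a h).indicator σ) x) ^ q * ENNReal.ofReal (u x)) ^ (1/q)

/-- The BMO seminorm. -/
def bmoNorm (n : ℕ) (b : Eucl n → ℝ) : ℝ≥0∞ :=
  ⨆ (a : Fin n → ℝ) (h : ℝ) (_ : 0 < h),
    lavg (cube n a h) (fun x => ENNReal.ofReal |b x - ⨍ y in cube n a h, b y|)

/-- The commutator `[b, I_α] f`. -/
def commFrac (n : ℕ) (α : ℝ) (b f : Eucl n → ℝ) (x : Eucl n) : ℝ :=
  ∫ y, (b x - b y) * f y * ‖x - y‖ ^ (α - (n:ℝ))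

/-- The dyadic commutator-type operator `C_b^D`. -/
def commGrid (n : ℕ) (α : ℝ) (D : Set (Set (Eucl n))) (b f : Eucl n → ℝ) (x : Eucl n) : ℝ≥0∞ :=
  ∑' Q : D, Set.indicator (Q : Set (Eucl n))
    (fun _ => volume (Q : Set (Eucl n)) ^ (α / (n:ℝ)) *
      lavg (Q : Set (Eucl n)) (fun y => ENNReal.ofReal (|b x - b y| * f y))) x

/-- Young functions. -/
def IsYoung (B : ℝ → ℝ) : Prop :=
  ContinuousOn B (Ici 0) ∧ ConvexOn ℝ (Ici 0) B ∧ StrictMonoOn B (Ici 0) ∧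
  B 0 = 0 ∧ Tendsto (fun t => B t / t) atTop atTop

/-- The associate Young function `B̄(t) = sup_{s>0} (st − B(s))`. -/
def youngConj (B : ℝ → ℝ) (t : ℝ) : ℝ :=
  sSup ((fun s => s * t - B s) '' Ioi 0)

/-- The `B_p` condition: `∫_1^∞ B(t)/t^p dt/t < ∞`. -/
def IsBp (B : ℝ → ℝ) (p : ℝ) : Prop :=
  IntegrableOn (fun t => B t / t ^ (p + 1)) (Ioi 1)

/-- The normalized Luxemburg norm of `f` on the cube `Q`. -/
def luxNorm {n : ℕ} (B : ℝ → ℝ) (Q : Set (Eucl n)) (f : Eucl n → ℝ) : ℝ :=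
  sInf {lam : ℝ | 0 < lam ∧ (⨍ x in Q, B (|f x| / lam)) ≤ 1}

/-- The separated bump constant `[u,σ]_{A_{p,q,B}^α}` (bump on the right). -/
def bumpRight (n : ℕ) (α p q : ℝ) (B : ℝ → ℝ) (u σ : Eucl n → ℝ) : ℝ≥0∞ :=
  ⨆ (a : Fin n → ℝ) (h : ℝ) (_ : 0 < h),
    volume (cube n a h) ^ (α / (n:ℝ) + 1/q - 1/p) *
    ((lavg (cube n a h) (fun x => ENNReal.ofReal (u x))) ^ (1/q) *
     ENNReal.ofReal (luxNorm B (cube n a h) (fun x => σ x ^ ((p-1)/p))))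

/-- The conjoined bump constant `[u,σ]_{A_{p,q,A,B}^α}`. -/
def bumpBoth (n : ℕ) (α p q : ℝ) (A B : ℝ → ℝ) (u σ : Eucl n → ℝ) : ℝ≥0∞ :=
  ⨆ (a : Fin n → ℝ) (h : ℝ) (_ : 0 < h),
    volume (cube n a h) ^ (α / (n:ℝ) + 1/q - 1/p) *
    (ENNReal.ofReal (luxNorm A (cube n a h) (fun x => u x ^ (1/q))) *
     ENNReal.ofReal (luxNorm B (cube n a h) (fun x => σ x ^ ((p-1)/p))))

/-- Strong operator norm of `I_α(·σ) : L^p(σ) → L^q(u)`. -/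
def strongNormI (n : ℕ) (α p q : ℝ) (u σ : Eucl n → ℝ) : ℝ≥0∞ :=
  ⨆ (f : Eucl n → ℝ) (_ : Measurable f)
    (_ : (∫⁻ x, ENNReal.ofReal |f x| ^ p * ENNReal.ofReal (σ x)) ≤ 1),
    (∫⁻ x, (fracIntE n α (fun y => |f y| * σ y) x) ^ q * ENNReal.ofReal (u x)) ^ (1/q)

/-- Weak operator norm of `I_α(·σ) : L^p(σ) → L^{q,∞}(u)`. -/
def weakNormI (n : ℕ) (α p q : ℝ) (u σ : Eucl n → ℝ) : ℝ≥0∞ :=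
  ⨆ (f : Eucl n → ℝ) (_ : Measurable f)
    (_ : (∫⁻ x, ENNReal.ofReal |f x| ^ p * ENNReal.ofReal (σ x)) ≤ 1)
    (t : ℝ) (_ : 0 < t),
    ENNReal.ofReal t *
      (setW u {x | ENNReal.ofReal t < fracIntE n α (fun y => |f y| * σ y) x}) ^ (1/q)


/-!
Necessity: testing the weak-type inequality on `f = 1_{Q ∩ {σ ≤ N}}` gives
`M_α(fσ) ≥ |Q|^{α/n-1} σ(Q ∩ {σ ≤ N})` on `Q`, which rearranges to
`|Q|^{α/n-1} u(Q)^{1/q} σ(Q ∩ {σ ≤ N})^{1/p'} ≤ C`; then let `N → ∞`.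

Sufficiency: if `t < |Q|^{α/n} ⟨|f|σ⟩_Q`, Hölder's inequality in `L^p(σ)` and the `A_{p,q}^α`
condition on the concentric cube `5Q` give `t u(5Q)^{1/q} ≤ 5^{n-α} [u,σ] (∫_Q |f|^p σ)^{1/p}`.
By the Vitali covering lemma the dilates `5Q_j` of disjoint such cubes cover the level set of
`M_α(fσ)`; raising to the power `q` and summing over `j` concludes, since `q/p ≥ 1` gives
`∑ a_j^{q/p} ≤ (∑ a_j)^{q/p}`.
-/

namespace ENNReal

lemma mul_le_of_forall_ofReal_lt {m x y : ℝ≥0∞}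
    (H : ∀ t : ℝ, 0 < t → ENNReal.ofReal t < m → ENNReal.ofReal t * x ≤ y) : m * x ≤ y := by
  refine ENNReal.mul_le_of_forall_lt fun c hc x' hx' => ?_
  rcases eq_or_ne c 0 with rfl | hc0
  · simp
  have hct : c ≠ ⊤ := hc.ne_top
  calc c * x' ≤ c * x := by gcongr
    _ ≤ y := by
      simpa [ENNReal.ofReal_toReal hct] using
        H c.toReal (ENNReal.toReal_pos hc0 hct) (by rwa [ENNReal.ofReal_toReal hct])

lemma mul_rpow_one_div_le_iff {a b c d : ℝ≥0∞} {p q : ℝ} (hq : 0 < q) :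
    a * b ^ (1 / q) ≤ c * d ^ (1 / p) ↔ a ^ q * b ≤ c ^ q * d ^ (q / p) := by
  rw [← ENNReal.rpow_le_rpow_iff hq, ENNReal.mul_rpow_of_nonneg _ _ hq.le,
    ENNReal.mul_rpow_of_nonneg _ _ hq.le, ← ENNReal.rpow_mul, ← ENNReal.rpow_mul,
    one_div_mul_cancel hq.ne', ENNReal.rpow_one, one_div_mul_eq_div]

lemma rpow_mul_div_self {v : ℝ≥0∞} (hv0 : v ≠ 0) (hvt : v ≠ ⊤) (s : ℝ) (x : ℝ≥0∞) :
    v ^ s * (x / v) = v ^ (s - 1) * x := by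
  rw [div_eq_mul_inv, ← ENNReal.rpow_neg_one, sub_eq_add_neg, ENNReal.rpow_add _ _ hv0 hvt]
  ring

lemma tsum_rpow_le_rpow_tsum {ι : Type*} (g : ι → ℝ≥0∞) {r : ℝ} (hr : 1 ≤ r) :
    ∑' i, g i ^ r ≤ (∑' i, g i) ^ r := by
  have hsplit : ∀ x : ℝ≥0∞, x ^ r = x * x ^ (r - 1) := fun x => by
    simpa using ENNReal.rpow_add_of_nonneg (x := x) 1 (r - 1) zero_le_one (by linarith)
  calc ∑' i, g i ^ r = ∑' i, g i * g i ^ (r - 1) := by simp only [← hsplit]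
    _ ≤ ∑' i, g i * (∑' j, g j) ^ (r - 1) := by
        gcongr with i
        exact ENNReal.le_tsum i
    _ = (∑' i, g i) ^ r := by rw [ENNReal.tsum_mul_right, ← hsplit]

end ENNReal

section Cubes

variable {n : ℕ}

/-- The cube `5Q` concentric with `Q = cube n b k`. -/
def fiveCube (n : ℕ) (b : Fin n → ℝ) (k : ℝ) : Set (Eucl n) :=
  cube n (fun i => b i - 2 * k) (5 * k)

lemma cube_eq_preimage (a : Fin n → ℝ) (h : ℝ) :
    cube n a h = (MeasurableEquiv.toLp 2 (Fin n → ℝ)).symm ⁻¹'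
      Set.univ.pi fun i => Set.Ico (a i) (a i + h) := by
  ext x
  simp [cube, Set.mem_pi, MeasurableEquiv.coe_toLp_symm]

lemma measurableSet_cube {a : Fin n → ℝ} {h : ℝ} : MeasurableSet (cube n a h) := by
  rw [cube_eq_preimage]
  exact (MeasurableEquiv.measurable _) (MeasurableSet.univ_pi fun _ => measurableSet_Ico)

lemma volume_cube (a : Fin n → ℝ) (h : ℝ) : volume (cube n a h) = ENNReal.ofReal h ^ n := by
  rw [cube_eq_preimage,
    (EuclideanSpace.volume_preserving_symm_measurableEquiv_toLp (Fin n)).measure_preimage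
      (MeasurableSet.univ_pi fun _ => measurableSet_Ico).nullMeasurableSet,
    volume_pi_pi]
  simp [Real.volume_Ico]

lemma volume_cube_ne_zero (a : Fin n → ℝ) {h : ℝ} (hh : 0 < h) : volume (cube n a h) ≠ 0 := by
  rw [volume_cube]
  exact pow_ne_zero _ (by simpa using hh)

lemma volume_cube_ne_top (a : Fin n → ℝ) (h : ℝ) : volume (cube n a h) ≠ ⊤ := by
  simp [volume_cube]

lemma cube_nonempty {a : Fin n → ℝ} {h : ℝ} (hh : 0 < h) : (cube n a h).Nonempty :=
  ⟨WithLp.toLp 2 a, fun _ => ⟨le_rfl, by simpa using hh⟩⟩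

lemma cube_subset_fiveCube {b : Fin n → ℝ} {k : ℝ} (hk : 0 ≤ k) : cube n b k ⊆ fiveCube n b k :=
  fun _ hx i => ⟨by linarith [(hx i).1], by linarith [(hx i).2]⟩

lemma subset_fiveCube_of_inter_nonempty {a b : Fin n → ℝ} {h k : ℝ} (hhk : h ≤ 2 * k)
    (hz : (cube n a h ∩ cube n b k).Nonempty) : cube n a h ⊆ fiveCube n b k := by
  obtain ⟨z, hza, hzb⟩ := hz
  intro x hx i
  have := hza i; have := hzb i; have := hx i
  constructor <;> linarith

lemma volume_fiveCube (b : Fin n → ℝ) (k : ℝ) :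
    volume (fiveCube n b k) = 5 ^ n * volume (cube n b k) := by
  rw [fiveCube, volume_cube, volume_cube, ENNReal.ofReal_mul (by norm_num), mul_pow]
  norm_num

lemma volume_rpow_eq_fiveCube (hn : 0 < n) (b : Fin n → ℝ) (k α : ℝ) :
    volume (cube n b k) ^ (α / n - 1) =
      (5 : ℝ≥0∞) ^ ((n : ℝ) - α) * volume (fiveCube n b k) ^ (α / n - 1) := by
  have hexp : (n : ℝ) - α + n * (α / n - 1) = 0 := by
    field_simp
    ring
  rw [volume_fiveCube, ENNReal.mul_rpow_of_ne_top (by simp) (volume_cube_ne_top b k),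
    ← mul_assoc, ← ENNReal.rpow_natCast, ← ENNReal.rpow_mul,
    ← ENNReal.rpow_add _ _ (by norm_num) (by norm_num), hexp, ENNReal.rpow_zero, one_mul]

lemma countable_of_pairwiseDisjoint_cube {𝒰 : Set ((Fin n → ℝ) × ℝ)} (hpos : ∀ j ∈ 𝒰, 0 < j.2)
    (hd : 𝒰.PairwiseDisjoint fun j => cube n j.1 j.2) : 𝒰.Countable := by
  have hcount := Measure.countable_meas_pos_of_disjoint_iUnion₀ (μ := volume)
    (As := fun j : 𝒰 => cube n j.1.1 j.1.2) (fun _ => measurableSet_cube.nullMeasurableSet)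
    fun i j hij => (hd i.2 j.2 (Subtype.coe_ne_coe.2 hij)).aedisjoint
  have huniv : {j : 𝒰 | 0 < volume (cube n j.1.1 j.1.2)} = Set.univ :=
    Set.eq_univ_of_forall fun j => pos_iff_ne_zero.2 (volume_cube_ne_zero j.1.1 (hpos _ j.2))
  rw [huniv] at hcount
  exact Set.countable_coe_iff.1 (Set.countable_univ_iff.1 hcount)

end Cubes

section Weights

variable {n : ℕ}

lemma setW_eq_withDensity (u : Eucl n → ℝ) (s : Set (Eucl n)) :
    setW u s = volume.withDensity (fun x => ENNReal.ofReal (u x)) s :=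
  (withDensity_apply' _ s).symm

lemma one_sub_one_div_pos {p : ℝ} (hp : 1 < p) : 0 < 1 - 1 / p :=
  sub_pos.2 ((div_lt_one (zero_lt_one.trans hp)).2 hp)

lemma setW_mono (u : Eucl n → ℝ) {s s' : Set (Eucl n)} (h : s ⊆ s') : setW u s ≤ setW u s' :=
  lintegral_mono_set h

/-- Hölder's inequality in `L^p(σ)`, paired with the constant function `1`. -/
lemma lintegral_abs_mul_le {f σ : Eucl n → ℝ} (hf : Measurable f) (hσ : Measurable σ)
    (hσ0 : ∀ x, 0 ≤ σ x) {p : ℝ} (hp : 1 < p) (s : Set (Eucl n)) :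
    ∫⁻ y in s, ENNReal.ofReal |f y * σ y| ≤
      (∫⁻ y in s, ENNReal.ofReal |f y| ^ p * ENNReal.ofReal (σ y)) ^ (1 / p) *
        setW σ s ^ (1 - 1 / p) := by
  have hp0 : 0 < p := zero_lt_one.trans hp
  have hp' : 0 ≤ 1 - 1 / p := (one_sub_one_div_pos hp).le
  have hsplit : ∀ y, ENNReal.ofReal |f y * σ y| =
      (ENNReal.ofReal |f y| ^ p * ENNReal.ofReal (σ y)) ^ (1 / p) *
        ENNReal.ofReal (σ y) ^ (1 - 1 / p) := fun y => by
    rw [ENNReal.mul_rpow_of_nonneg _ _ (by positivity), ← ENNReal.rpow_mul,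
      mul_one_div_cancel hp0.ne', ENNReal.rpow_one, mul_assoc,
      ← ENNReal.rpow_add_of_nonneg _ _ (by positivity) hp', add_sub_cancel, ENNReal.rpow_one,
      abs_mul, abs_of_nonneg (hσ0 y), ENNReal.ofReal_mul (abs_nonneg _)]
  simp_rw [hsplit]
  exact ENNReal.lintegral_mul_norm_pow_le
    ((hf.abs.ennreal_ofReal.pow_const p).mul hσ.ennreal_ofReal).aemeasurable
    hσ.ennreal_ofReal.aemeasurable (by positivity) hp' (by ring)

variable {α p q : ℝ}

lemma apqAlpha_eq (hp : 1 < p) (hq : 0 < q) (u σ : Eucl n → ℝ) :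
    apqAlpha n α p q u σ = ⨆ (a : Fin n → ℝ) (h : ℝ) (_ : 0 < h),
      volume (cube n a h) ^ (α / n - 1) *
        (setW u (cube n a h) ^ (1 / q) * setW σ (cube n a h) ^ (1 - 1 / p)) := by
  refine iSup_congr fun a => iSup_congr fun h => iSup_congr fun hh => ?_
  set v := volume (cube n a h)
  have hv0 : v ≠ 0 := volume_cube_ne_zero a hh
  have hvt : v ≠ ⊤ := volume_cube_ne_top a h
  change v ^ _ * ((setW u _ / v) ^ _ * (setW σ _ / v) ^ _) = _
  rw [ENNReal.div_rpow_of_nonneg _ _ (by positivity),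
    ENNReal.div_rpow_of_nonneg _ _ (one_sub_one_div_pos hp).le,
    div_eq_mul_inv (setW u _ ^ _), div_eq_mul_inv (setW σ _ ^ _), ← ENNReal.rpow_neg,
    ← ENNReal.rpow_neg]
  calc v ^ (α / n + 1 / q - 1 / p) * (setW u (cube n a h) ^ (1 / q) * v ^ (-(1 / q)) *
        (setW σ (cube n a h) ^ (1 - 1 / p) * v ^ (-(1 - 1 / p))))
      = v ^ (α / n + 1 / q - 1 / p) * v ^ (-(1 / q)) * v ^ (-(1 - 1 / p)) *
        (setW u (cube n a h) ^ (1 / q) * setW σ (cube n a h) ^ (1 - 1 / p)) := by ring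
    _ = _ := by
      rw [← ENNReal.rpow_add _ _ hv0 hvt, ← ENNReal.rpow_add _ _ hv0 hvt]
      ring_nf

lemma volume_rpow_mul_setW_le_apqAlpha (hp : 1 < p) (hq : 0 < q) (u σ : Eucl n → ℝ)
    (a : Fin n → ℝ) {h : ℝ} (hh : 0 < h) :
    volume (cube n a h) ^ (α / n - 1) *
        (setW u (cube n a h) ^ (1 / q) * setW σ (cube n a h) ^ (1 - 1 / p)) ≤
      apqAlpha n α p q u σ := by
  rw [apqAlpha_eq hp hq]
  exact le_iSup₂_of_le a h (le_iSup_of_le hh le_rfl)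

end Weights

/-- `f ↦ M_α(f σ)` is of weak type `(p, q)`, from `L^p(σ)` to `L^{q,∞}(u)`, with constant `C`. -/
def MaxFnWeakType (n : ℕ) (α p q : ℝ) (u σ : Eucl n → ℝ) (C : ℝ≥0∞) : Prop :=
  ∀ f : Eucl n → ℝ, Measurable f → ∀ t : ℝ, 0 < t →
    ENNReal.ofReal t *
        setW u {x | ENNReal.ofReal t < maxFn n α (fun y => f y * σ y) x} ^ (1 / q) ≤
      C * (∫⁻ x, ENNReal.ofReal |f x| ^ p * ENNReal.ofReal (σ x)) ^ (1 / p)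

section Sufficiency

variable {n : ℕ} {α p q : ℝ} {u σ : Eucl n → ℝ}

lemma mul_setW_fiveCube_le {f : Eucl n → ℝ} (hn : 0 < n) (hp : 1 < p) (hq : 0 < q)
    (hσm : Measurable σ) (hσ0 : ∀ x, 0 ≤ σ x) (hf : Measurable f) {t : ℝ} {b : Fin n → ℝ}
    {k : ℝ} (hk : 0 < k) (ht : ENNReal.ofReal t < volume (cube n b k) ^ (α / n) *
      lavg (cube n b k) (fun y => ENNReal.ofReal |f y * σ y|)) :
    ENNReal.ofReal t * setW u (fiveCube n b k) ^ (1 / q) ≤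
      (5 : ℝ≥0∞) ^ ((n : ℝ) - α) * apqAlpha n α p q u σ *
        (∫⁻ y in cube n b k, ENNReal.ofReal |f y| ^ p * ENNReal.ofReal (σ y)) ^ (1 / p) := by
  set Q := cube n b k
  set P := fiveCube n b k
  set G := ∫⁻ y in Q, ENNReal.ofReal |f y| ^ p * ENNReal.ofReal (σ y)
  have hσQP : setW σ Q ≤ setW σ P := setW_mono σ (cube_subset_fiveCube hk.le)
  calc ENNReal.ofReal t * setW u P ^ (1 / q)
      ≤ volume Q ^ (α / n - 1) * (∫⁻ y in Q, ENNReal.ofReal |f y * σ y|) *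
          setW u P ^ (1 / q) := by
        rw [← ENNReal.rpow_mul_div_self (volume_cube_ne_zero b hk) (volume_cube_ne_top b k)]
        exact mul_le_mul_left ht.le _
    _ ≤ volume Q ^ (α / n - 1) * (G ^ (1 / p) * setW σ P ^ (1 - 1 / p)) *
          setW u P ^ (1 / q) := by
        have := (one_sub_one_div_pos hp).le
        grw [lintegral_abs_mul_le hf hσm hσ0 hp Q, hσQP]
    _ = 5 ^ ((n : ℝ) - α) * G ^ (1 / p) *
          (volume P ^ (α / n - 1) * (setW u P ^ (1 / q) * setW σ P ^ (1 - 1 / p))) := by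
        rw [volume_rpow_eq_fiveCube hn]
        ring
    _ ≤ 5 ^ ((n : ℝ) - α) * G ^ (1 / p) * apqAlpha n α p q u σ := by
        gcongr
        exact volume_rpow_mul_setW_le_apqAlpha hp hq u σ _ (by linarith : (0 : ℝ) < 5 * k)
    _ = _ := by ring

def levelCubes (n : ℕ) (α : ℝ) (g : Eucl n → ℝ) (t : ℝ) : Set ((Fin n → ℝ) × ℝ) :=
  {j | 0 < j.2 ∧ ENNReal.ofReal t <
    volume (cube n j.1 j.2) ^ (α / n) * lavg (cube n j.1 j.2) (fun y => ENNReal.ofReal |g y|)}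

lemma setOf_lt_maxFn_subset (g : Eucl n → ℝ) (t : ℝ) :
    {x | ENNReal.ofReal t < maxFn n α g x} ⊆ ⋃ j ∈ levelCubes n α g t, cube n j.1 j.2 := by
  intro x hx
  change ENNReal.ofReal t < maxFn n α g x at hx
  simp only [maxFn, lt_iSup_iff] at hx
  obtain ⟨a, h, hh, hxQ, hlt⟩ := hx
  exact Set.mem_biUnion (x := (a, h)) ⟨hh, hlt⟩ hxQ

lemma rpow_mul_setW_biUnion_levelCubes_le {f : Eucl n → ℝ} (hn : 0 < n) (hp : 1 < p)
    (hpq : p ≤ q) (hσm : Measurable σ) (hσ0 : ∀ x, 0 ≤ σ x) (hf : Measurable f) (t R : ℝ) :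
    ENNReal.ofReal t ^ q * setW u (⋃ j ∈ {j ∈ levelCubes n α (fun y => f y * σ y) t | j.2 ≤ R},
        cube n j.1 j.2) ≤
      ((5 : ℝ≥0∞) ^ ((n : ℝ) - α) * apqAlpha n α p q u σ) ^ q *
        (∫⁻ x, ENNReal.ofReal |f x| ^ p * ENNReal.ofReal (σ x)) ^ (q / p) := by
  have hp0 : 0 < p := zero_lt_one.trans hp
  have hq : 0 < q := hp0.trans_le hpq
  set S := {j ∈ levelCubes n α (fun y => f y * σ y) t | j.2 ≤ R}
  set K := (5 : ℝ≥0∞) ^ ((n : ℝ) - α) * apqAlpha n α p q u σ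
  set w := fun x => ENNReal.ofReal |f x| ^ p * ENNReal.ofReal (σ x)
  obtain ⟨𝒰, h𝒰S, h𝒰disj, h𝒰cover⟩ := Vitali.exists_disjoint_subfamily_covering_enlargement
    (fun j => cube n j.1 j.2) S Prod.snd 2 one_lt_two (fun j hj => hj.1.1.le) R
    (fun j hj => hj.2) (fun j hj => cube_nonempty hj.1.1)
  have : Countable 𝒰 :=
    (countable_of_pairwiseDisjoint_cube (fun j hj => (h𝒰S hj).1.1) h𝒰disj).to_subtype
  have hcover : (⋃ j ∈ S, cube n j.1 j.2) ⊆ ⋃ j : 𝒰, fiveCube n j.1.1 j.1.2 := by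
    refine Set.iUnion₂_subset fun j hj => ?_
    obtain ⟨b, hb, hjb, hle⟩ := h𝒰cover j hj
    exact (subset_fiveCube_of_inter_nonempty hle hjb).trans
      (Set.subset_iUnion (fun i : 𝒰 => fiveCube n i.1.1 i.1.2) ⟨b, hb⟩)
  have hdisj : Pairwise (Function.onFun Disjoint fun j : 𝒰 => cube n j.1.1 j.1.2) :=
    fun i j hij => h𝒰disj i.2 j.2 (Subtype.coe_ne_coe.2 hij)
  have hcube : ∀ j : 𝒰, ENNReal.ofReal t ^ q * setW u (fiveCube n j.1.1 j.1.2) ≤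
      K ^ q * (∫⁻ y in cube n j.1.1 j.1.2, w y) ^ (q / p) := fun j =>
    (ENNReal.mul_rpow_one_div_le_iff hq).1
      (mul_setW_fiveCube_le hn hp hq hσm hσ0 hf (h𝒰S j.2).1.1 (h𝒰S j.2).1.2)
  calc ENNReal.ofReal t ^ q * setW u (⋃ j ∈ S, cube n j.1 j.2)
      ≤ ENNReal.ofReal t ^ q * ∑' j : 𝒰, setW u (fiveCube n j.1.1 j.1.2) := by
        simp only [setW_eq_withDensity]
        gcongr
        exact (measure_mono hcover).trans (measure_iUnion_le _)
    _ = ∑' j : 𝒰, ENNReal.ofReal t ^ q * setW u (fiveCube n j.1.1 j.1.2) :=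
        ENNReal.tsum_mul_left.symm
    _ ≤ ∑' j : 𝒰, K ^ q * (∫⁻ y in cube n j.1.1 j.1.2, w y) ^ (q / p) :=
        ENNReal.tsum_le_tsum hcube
    _ = K ^ q * ∑' j : 𝒰, (∫⁻ y in cube n j.1.1 j.1.2, w y) ^ (q / p) := ENNReal.tsum_mul_left
    _ ≤ K ^ q * (∑' j : 𝒰, ∫⁻ y in cube n j.1.1 j.1.2, w y) ^ (q / p) := by
        gcongr
        exact ENNReal.tsum_rpow_le_rpow_tsum _ ((one_le_div hp0).2 hpq)
    _ = K ^ q * (∫⁻ y in ⋃ j : 𝒰, cube n j.1.1 j.1.2, w y) ^ (q / p) := by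
        rw [lintegral_iUnion (fun _ => measurableSet_cube) hdisj]
    _ ≤ K ^ q * (∫⁻ y, w y) ^ (q / p) := by
        gcongr
        exact Measure.restrict_le_self

theorem maxFnWeakType_of_apqAlpha (hn : 0 < n) (hp : 1 < p) (hpq : p ≤ q)
    (hσm : Measurable σ) (hσ0 : ∀ x, 0 ≤ σ x) :
    MaxFnWeakType n α p q u σ ((5 : ℝ≥0∞) ^ ((n : ℝ) - α) * apqAlpha n α p q u σ) := by
  intro f hf t _
  rw [ENNReal.mul_rpow_one_div_le_iff (zero_lt_one.trans (hp.trans_le hpq))]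
  -- Vitali's lemma needs cubes of bounded size, so exhaust the level set by side length.
  set E : ℕ → Set (Eucl n) := fun N =>
    ⋃ j ∈ {j ∈ levelCubes n α (fun y => f y * σ y) t | j.2 ≤ N}, cube n j.1 j.2
  have hmono : Monotone E := fun N M hNM =>
    Set.biUnion_subset_biUnion_left fun j hj => ⟨hj.1, hj.2.trans (by exact_mod_cast hNM)⟩
  have hlevel : {x | ENNReal.ofReal t < maxFn n α (fun y => f y * σ y) x} ⊆ ⋃ N, E N := by
    refine (setOf_lt_maxFn_subset _ t).trans fun x hx => ?_
    obtain ⟨j, hj, hxj⟩ := Set.mem_iUnion₂.1 hx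
    exact Set.mem_iUnion.2 ⟨⌈j.2⌉₊, Set.mem_biUnion ⟨hj, Nat.le_ceil _⟩ hxj⟩
  calc ENNReal.ofReal t ^ q * setW u {x | ENNReal.ofReal t < maxFn n α (fun y => f y * σ y) x}
      ≤ ENNReal.ofReal t ^ q * ⨆ N, setW u (E N) := by
        simp only [setW_eq_withDensity]
        rw [← hmono.measure_iUnion]
        gcongr
    _ = ⨆ N, ENNReal.ofReal t ^ q * setW u (E N) := ENNReal.mul_iSup _ _
    _ ≤ _ := iSup_le fun N => rpow_mul_setW_biUnion_levelCubes_le hn hp hpq hσm hσ0 hf t N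

end Sufficiency

section Necessity

variable {n : ℕ} {α p q : ℝ} {u σ : Eucl n → ℝ} {C : ℝ≥0∞}

/-- Testing the weak-type inequality on `f = 1_E` with `E ⊆ Q`. -/
lemma volume_rpow_mul_setW_le_of_maxFnWeakType (hp : 1 < p) (hq : 0 < q)
    (H : MaxFnWeakType n α p q u σ C) (hσ0 : ∀ x, 0 ≤ σ x) {a : Fin n → ℝ} {h : ℝ} (hh : 0 < h)
    {E : Set (Eucl n)} (hE : MeasurableSet E) (hEQ : E ⊆ cube n a h) (hEfin : setW σ E ≠ ⊤) :
    volume (cube n a h) ^ (α / n - 1) *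
      (setW u (cube n a h) ^ (1 / q) * setW σ E ^ (1 - 1 / p)) ≤ C := by
  have hp0 : 0 < p := zero_lt_one.trans hp
  set Q := cube n a h
  set v := volume Q
  set S := setW σ E
  have hv0 : v ≠ 0 := volume_cube_ne_zero a hh
  have hvt : v ≠ ⊤ := volume_cube_ne_top a h
  have hfσ : ∀ y, ENNReal.ofReal |E.indicator 1 y * σ y| =
      E.indicator (fun y => ENNReal.ofReal (σ y)) y := fun y => by
    by_cases hy : y ∈ E <;> simp [hy, abs_of_nonneg (hσ0 y)]
  have hnorm : ∫⁻ x, ENNReal.ofReal |E.indicator 1 x| ^ p * ENNReal.ofReal (σ x) = S := by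
    rw [show S = ∫⁻ x in E, ENNReal.ofReal (σ x) from rfl, ← lintegral_indicator hE]
    congr with x
    by_cases hx : x ∈ E <;> simp [hx, ENNReal.zero_rpow_of_pos hp0]
  have hmax : ∀ x ∈ Q, v ^ (α / n - 1) * S ≤ maxFn n α (fun y => E.indicator 1 y * σ y) x := by
    intro x hx
    rw [← ENNReal.rpow_mul_div_self hv0 hvt]
    refine le_iSup₂_of_le a h (le_iSup₂_of_le hh hx (le_of_eq ?_))
    simp only [lavg, hfσ]
    rw [lintegral_indicator hE, Measure.restrict_restrict hE, Set.inter_eq_left.2 hEQ]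
    rfl
  have hweak : v ^ (α / n - 1) * S * setW u Q ^ (1 / q) ≤ C * S ^ (1 / p) := by
    refine ENNReal.mul_le_of_forall_ofReal_lt fun t ht htS => ?_
    calc ENNReal.ofReal t * setW u Q ^ (1 / q)
        ≤ ENNReal.ofReal t * setW u
            {x | ENNReal.ofReal t < maxFn n α (fun y => E.indicator 1 y * σ y) x} ^ (1 / q) := by
          have : 0 ≤ 1 / q := by positivity
          gcongr
          exact setW_mono u fun x hx => htS.trans_le (hmax x hx)
      _ ≤ C * S ^ (1 / p) := hnorm ▸ H _ (measurable_one.indicator hE) t ht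
  rcases eq_or_ne S 0 with hS0 | hS0
  · rw [hS0, ENNReal.zero_rpow_of_pos (one_sub_one_div_pos hp)]
    simp
  have hS : S = S ^ (1 / p) * S ^ (1 - 1 / p) := by
    rw [← ENNReal.rpow_add_of_nonneg _ _ (by positivity) (one_sub_one_div_pos hp).le]
    simp
  refine (ENNReal.mul_le_mul_iff_left
    (ENNReal.rpow_pos (p := 1 / p) (pos_iff_ne_zero.2 hS0) hEfin).ne'
    (ENNReal.rpow_ne_top_of_nonneg (by positivity) hEfin)).1 ?_
  calc v ^ (α / n - 1) * (setW u Q ^ (1 / q) * S ^ (1 - 1 / p)) * S ^ (1 / p)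
      = v ^ (α / n - 1) * (S ^ (1 / p) * S ^ (1 - 1 / p)) * setW u Q ^ (1 / q) := by ring
    _ ≤ C * S ^ (1 / p) := by rwa [← hS]

theorem apqAlpha_le_of_maxFnWeakType (hp : 1 < p) (hpq : p ≤ q) (hσm : Measurable σ)
    (hσ0 : ∀ x, 0 ≤ σ x) (H : MaxFnWeakType n α p q u σ C) : apqAlpha n α p q u σ ≤ C := by
  have hq : 0 < q := zero_lt_one.trans (hp.trans_le hpq)
  rw [apqAlpha_eq hp hq]
  refine iSup_le fun a => iSup_le fun h => iSup_le fun hh => ?_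
  set Q := cube n a h
  -- Truncate where `σ` is large, so that the test functions lie in `L^p(σ)`.
  set E : ℕ → Set (Eucl n) := fun N => Q ∩ {x | σ x ≤ N}
  have hEm : ∀ N, MeasurableSet (E N) := fun N =>
    measurableSet_cube.inter (measurableSet_le hσm measurable_const)
  have hEfin : ∀ N, setW σ (E N) ≠ ⊤ := fun N => by
    refine ne_top_of_le_ne_top
      (ENNReal.mul_ne_top (ENNReal.ofReal_ne_top (r := N)) (volume_cube_ne_top a h)) ?_
    calc setW σ (E N) ≤ ∫⁻ _ in E N, ENNReal.ofReal N :=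
          setLIntegral_mono measurable_const fun x hx => ENNReal.ofReal_le_ofReal hx.2
      _ ≤ ENNReal.ofReal N * volume Q := by
          rw [setLIntegral_const]
          gcongr
          exact Set.inter_subset_left
  have hEmono : Monotone E := fun N M hNM =>
    Set.inter_subset_inter_right _ fun x (hx : σ x ≤ N) =>
      (hx.trans (by exact_mod_cast hNM) : σ x ≤ M)
  have hsup : setW σ Q = ⨆ N, setW σ (E N) := by
    simp only [setW_eq_withDensity]
    rw [← hEmono.measure_iUnion, ← Set.inter_iUnion]
    congr
    exact (Set.inter_eq_left.2 fun x _ => Set.mem_iUnion.2 (exists_nat_ge (σ x))).symm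
  calc volume Q ^ (α / n - 1) * (setW u Q ^ (1 / q) * setW σ Q ^ (1 - 1 / p))
      = ⨆ N, volume Q ^ (α / n - 1) * (setW u Q ^ (1 / q) * setW σ (E N) ^ (1 - 1 / p)) := by
        rw [hsup, ← ENNReal.orderIsoRpow_apply _ (one_sub_one_div_pos hp), OrderIso.map_iSup,
          ENNReal.mul_iSup, ENNReal.mul_iSup]
        rfl
    _ ≤ C := iSup_le fun N => volume_rpow_mul_setW_le_of_maxFnWeakType hp hq H hσ0 hh (hEm N)
        Set.inter_subset_left (hEfin N)

end Necessity

theorem statement13_general (n : ℕ) (hn : 0 < n) (α p q : ℝ)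
    (hp : 1 < p) (hpq : p ≤ q) :
    ∃ C : ℝ≥0, 0 < C ∧ ∀ u σ : Eucl n → ℝ, Weight u → Weight σ →
      ((apqAlpha n α p q u σ ≠ ⊤) ↔
        (∃ C' : ℝ≥0, ∀ f : Eucl n → ℝ, Measurable f → ∀ t : ℝ, 0 < t →
          ENNReal.ofReal t *
            (setW u {x | ENNReal.ofReal t < maxFn n α (fun y => f y * σ y) x}) ^ (1/q) ≤
          (C' : ℝ≥0∞) *
            (∫⁻ x, ENNReal.ofReal |f x| ^ p * ENNReal.ofReal (σ x)) ^ (1/p))) ∧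
      (apqAlpha n α p q u σ ≠ ⊤ →
        ∀ f : Eucl n → ℝ, Measurable f → ∀ t : ℝ, 0 < t →
          ENNReal.ofReal t *
            (setW u {x | ENNReal.ofReal t < maxFn n α (fun y => f y * σ y) x}) ^ (1/q) ≤
          (C : ℝ≥0∞) * apqAlpha n α p q u σ *
            (∫⁻ x, ENNReal.ofReal |f x| ^ p * ENNReal.ofReal (σ x)) ^ (1/p)) := by
  refine ⟨(5 : ℝ≥0) ^ ((n : ℝ) - α), by positivity, fun u σ _ hσ => ?_⟩
  obtain ⟨hσm, hσ0, -⟩ := hσ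
  have hweak : MaxFnWeakType n α p q u σ
      (((5 : ℝ≥0) ^ ((n : ℝ) - α) : ℝ≥0) * apqAlpha n α p q u σ) := by
    rw [ENNReal.coe_rpow_of_ne_zero (by norm_num)]
    exact maxFnWeakType_of_apqAlpha hn hp hpq hσm hσ0
  refine ⟨⟨fun hA => ⟨(5 : ℝ≥0) ^ ((n : ℝ) - α) * (apqAlpha n α p q u σ).toNNReal, ?_⟩,
    fun ⟨C', hC'⟩ => ne_top_of_le_ne_top ENNReal.coe_ne_top
      (apqAlpha_le_of_maxFnWeakType hp hpq hσm hσ0 hC')⟩, fun _ => hweak⟩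
  rwa [ENNReal.coe_mul, ENNReal.coe_toNNReal hA]

/-- two-weight `A_{p,q}^α` characterizes the weak type for `M_α`. -/
theorem statement13 (n : ℕ) (hn : 0 < n) (α p q : ℝ) (hα0 : 0 < α) (hαn : α < n)
    (hp : 1 < p) (hpq : p ≤ q) :
    ∃ C : ℝ≥0, 0 < C ∧ ∀ u σ : Eucl n → ℝ, Weight u → Weight σ →
      ((apqAlpha n α p q u σ ≠ ⊤) ↔
        (∃ C' : ℝ≥0, ∀ f : Eucl n → ℝ, Measurable f → ∀ t : ℝ, 0 < t →
          ENNReal.ofReal t *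
            (setW u {x | ENNReal.ofReal t < maxFn n α (fun y => f y * σ y) x}) ^ (1/q) ≤
          (C' : ℝ≥0∞) *
            (∫⁻ x, ENNReal.ofReal |f x| ^ p * ENNReal.ofReal (σ x)) ^ (1/p))) ∧
      (apqAlpha n α p q u σ ≠ ⊤ →
        ∀ f : Eucl n → ℝ, Measurable f → ∀ t : ℝ, 0 < t →
          ENNReal.ofReal t *
            (setW u {x | ENNReal.ofReal t < maxFn n α (fun y => f y * σ y) x}) ^ (1/q) ≤
          (C : ℝ≥0∞) * apqAlpha n α p q u σ *
            (∫⁻ x, ENNReal.ofReal |f x| ^ p * ENNReal.ofReal (σ x)) ^ (1/p)) :=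
  statement13_general n hn α p q hp hpq
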